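/- Let f(t) = ∑_{n≥0} (−1)^{n+1} c_n t^{n+1} be the alternating generating series of the Catalan numbers and g(t) = −t + t². Then g(f(t)) = t as formal power series over ℚ. -/

import Mathlib

/-!
`pcomp f g` is Mathlib's substitution `f.subst g` (the truncation at `k ≤ n` is harmless since
`g ^ k` has order at least `k`), so `g(f(t)) = -f + f²`. Writing `f = -t C(-t)` with `C` the
Catalan series, the identity `-f + f² = t` is the functional equation `C = 1 + t C²` at `-t`.
-/

open PowerSeries

/-- Composition `f(g)` of formal power series (intended for `g` with zero constant term). -/
noncomputable def pcomp (f g : PowerSeries ℚ) : PowerSeries ℚ :=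
  PowerSeries.mk fun n =>
    ∑ k ∈ Finset.range (n + 1), (PowerSeries.coeff (R := ℚ) k f) * (PowerSeries.coeff (R := ℚ) n (g ^ k))

/-- `f(t) = ∑_{n≥0} (−1)^{n+1} c_n t^{n+1}`, the alternating generating series of the
Catalan numbers: the coefficient of `t^m` (for `m ≥ 1`) is `(−1)^m c_{m-1}`. -/
noncomputable def fCat : PowerSeries ℚ :=
  PowerSeries.mk fun m => if m = 0 then 0 else (-1 : ℚ) ^ m * (catalan (m - 1) : ℚ)

theorem PowerSeries.coeff_pow_eq_zero_of_lt {R : Type*} [CommRing R] {g : R⟦X⟧}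
    (hg : constantCoeff g = 0) {n k : ℕ} (h : n < k) : coeff n (g ^ k) = 0 :=
  coeff_of_lt_order n <| (Nat.cast_lt.mpr h).trans_le (le_order_pow_of_constantCoeff_eq_zero k hg)

theorem pcomp_eq_subst (f : ℚ⟦X⟧) {g : ℚ⟦X⟧} (hg : constantCoeff g = 0) :
    pcomp f g = f.subst g := by
  ext n
  rw [pcomp, coeff_mk, coeff_subst' (HasSubst.of_constantCoeff_zero' hg)]
  refine (finsum_eq_sum_of_support_subset _ fun k hk => ?_).symm
  simp only [Finset.coe_range, Set.mem_Iio]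
  by_contra! hnk
  exact hk (by simp only [coeff_pow_eq_zero_of_lt hg hnk, mul_zero])

theorem fCat_eq_neg_X_mul_rescale_catalanSeries :
    fCat = -(X * rescale (-1) (catalanSeries.map (Nat.castRingHom ℚ))) := by
  ext m
  rcases m with _ | m
  · simp [fCat]
  · simp [fCat, coeff_succ_X_mul, coeff_rescale, pow_succ]

theorem constantCoeff_fCat : constantCoeff fCat = 0 := by
  simp [fCat_eq_neg_X_mul_rescale_catalanSeries]

theorem neg_fCat_add_fCat_sq : -fCat + fCat ^ 2 = X := by
  have h := congrArg (rescale (-1 : ℚ) ∘ map (Nat.castRingHom ℚ)) catalanSeries_sq_mul_X_add_one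
  simp only [Function.comp_apply, map_add, map_mul, map_pow, map_X, map_one, rescale_X,
    map_neg] at h
  rw [fCat_eq_neg_X_mul_rescale_catalanSeries]
  linear_combination -X * h

/-- With `g(t) = −t + t²`, one has `g(f(t)) = t`. -/
theorem g_comp_fCat : pcomp (-X + X ^ 2 : PowerSeries ℚ) fCat = X := by
  have hsubst := HasSubst.of_constantCoeff_zero' constantCoeff_fCat
  rw [pcomp_eq_subst _ constantCoeff_fCat, ← coe_substAlgHom hsubst, map_add, map_neg, map_pow,
    substAlgHom_X, neg_fCat_add_fCat_sq]
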